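/- arXiv:1712.00464 — 3 statements merged into one kernel-verified Lean document; each statement's English description precedes it below -/
import Mathlib

section
/- Let G be a finite abelian group of diagonal matrices in SL(3, ℂ) such that no nontrivial element of G has 1 as an eigenvalue. Then G is cyclic. -/
/-- a finite (abelian) group of diagonal matrices in `SL(3,ℂ)`
in which no nontrivial element has `1` as an eigenvalue (i.e. no nontrivial
element has a diagonal entry equal to `1`) is cyclic. -/
theorem stmt2 (G : Subgroup (Matrix.SpecialLinearGroup (Fin 3) ℂ)) [Finite G]
    (hdiag : ∀ g ∈ G, (g : Matrix (Fin 3) (Fin 3) ℂ).IsDiag)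
    (heig : ∀ g ∈ G, g ≠ 1 → ∀ i : Fin 3, (g : Matrix (Fin 3) (Fin 3) ℂ) i i ≠ 1) :
    IsCyclic G := by
  let f : G →* ℂ :=
  { toFun := fun g => ((g : Matrix.SpecialLinearGroup (Fin 3) ℂ) : Matrix (Fin 3) (Fin 3) ℂ) 0 0
    map_one' := by simp
    map_mul' := by
      intro a b
      have hb := hdiag b b.2
      show ((((a * b : G) : Matrix.SpecialLinearGroup (Fin 3) ℂ)) : Matrix (Fin 3) (Fin 3) ℂ) 0 0 = _
      rw [Subgroup.coe_mul, Matrix.SpecialLinearGroup.coe_mul, Matrix.mul_apply]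
      rw [Finset.sum_eq_single 0]
      · intro j _ hj
        rw [hb hj, mul_zero]
      · intro h; exact absurd (Finset.mem_univ 0) h }
  have hinj : Function.Injective f := by
    rw [injective_iff_map_eq_one]
    intro a ha
    by_contra h
    exact heig a a.2 (fun he => h (Subtype.ext he)) 0 ha
  exact isCyclic_of_subgroup_isDomain f hinj
end

section
/- Let p be a prime and let g₁ = diag(ζ₁^{a₁}, ζ₁^{b₁}, ζ₁^{c₁}) and g₂ = diag(ζ₂^{a₂}, ζ₂^{b₂}, ζ₂^{c₂}) where ζ₁ = exp(2πi/p^{n₁}), ζ₂ = exp(2πi/p^{n₂}), n₁ ≤ n₂, and a₁, a₂ are coprime with p. Suppose that no nontrivial element of the group generated by g₁ and g₂ has 1 as an eigenvalue. Then g₁ lies in the cyclic group generated by g₂. -/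
/-!
Since `a₂` is prime to `p`, `ζ₂ ^ a₂` is again a primitive `p ^ n₂`-th root of unity, and
`ζ₁ ^ a₁` is a `p ^ n₂`-th root of unity because `n₁ ≤ n₂`. Hence `ζ₁ ^ a₁ * (ζ₂ ^ a₂) ^ k = 1`
for some `k`, i.e. `g₁ * g₂ ^ k` has `1` as its first diagonal entry. By hypothesis this element
of the group generated by `g₁, g₂` must be trivial, so `g₁ = g₂ ^ (-k)`.
-/

open Complex

theorem Matrix.diagonal_mul_diagonal_pow_apply_self {n R : Type*} [Fintype n] [DecidableEq n]
    [CommSemiring R] (d e : n → R) (k : ℕ) (i : n) :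
    (diagonal d * diagonal e ^ k) i i = d i * e i ^ k := by
  rw [diagonal_pow, diagonal_mul_diagonal, diagonal_apply_eq, Pi.pow_apply]

theorem Subgroup.mem_zpowers_of_mul_pow_eq_one {G : Type*} [Group G] {x y : G} {k : ℕ}
    (h : x * y ^ k = 1) : x ∈ zpowers y :=
  ⟨-k, show y ^ (-(k : ℤ)) = x by rw [zpow_neg, zpow_natCast, eq_inv_of_mul_eq_one_left h]⟩

theorem IsPrimitiveRoot.exists_mul_zpow_pow_eq_one {K : Type*} [Field K] {ζ ξ : K} {N : ℕ}
    [NeZero N] (hζ : IsPrimitiveRoot ζ N) {a : ℤ} (ha : a.gcd N = 1) (hξ : ξ ^ N = 1) :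
    ∃ k : ℕ, ξ * (ζ ^ a) ^ k = 1 := by
  obtain ⟨k, -, hk⟩ := (hζ.zpow_of_gcd_eq_one a ha).eq_pow_of_pow_eq_one (ξ := ξ⁻¹)
    (by rw [inv_pow, hξ, inv_one])
  refine ⟨k, ?_⟩
  rw [hk, mul_inv_cancel₀]
  rintro rfl
  simp [NeZero.ne N] at hξ

theorem Complex.exp_two_pi_mul_I_div_pow_pow_eq_one {p : ℕ} (hp : p ≠ 0) {m n : ℕ} (hmn : m ≤ n) :
    exp (2 * Real.pi * I / (p ^ m : ℕ)) ^ (p ^ n) = 1 :=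
  ((isPrimitiveRoot_exp _ (pow_ne_zero m hp)).pow_eq_one_iff_dvd _).2 (pow_dvd_pow p hmn)

theorem stmt3_general (p : ℕ) (hp : p.Prime) (n₁ n₂ : ℕ) (hn : n₁ ≤ n₂)
    (a₁ b₁ c₁ a₂ b₂ c₂ : ℤ)
    (ha₂ : Int.gcd a₂ p = 1)
    (ζ₁ ζ₂ : ℂ)
    (hζ₁ : ζ₁ = Complex.exp (2 * Real.pi * Complex.I / (p ^ n₁ : ℕ)))
    (hζ₂ : ζ₂ = Complex.exp (2 * Real.pi * Complex.I / (p ^ n₂ : ℕ)))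
    (g₁ g₂ : Matrix.GeneralLinearGroup (Fin 3) ℂ)
    (hg₁ : (g₁ : Matrix (Fin 3) (Fin 3) ℂ) = Matrix.diagonal ![ζ₁ ^ a₁, ζ₁ ^ b₁, ζ₁ ^ c₁])
    (hg₂ : (g₂ : Matrix (Fin 3) (Fin 3) ℂ) = Matrix.diagonal ![ζ₂ ^ a₂, ζ₂ ^ b₂, ζ₂ ^ c₂])
    (hnoeig : ∀ h ∈ Subgroup.closure ({g₁, g₂} : Set (Matrix.GeneralLinearGroup (Fin 3) ℂ)),
      h ≠ 1 → ∀ i : Fin 3, (h : Matrix (Fin 3) (Fin 3) ℂ) i i ≠ 1) :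
    g₁ ∈ Subgroup.zpowers g₂ := by
  have : NeZero (p ^ n₂) := ⟨pow_ne_zero n₂ hp.ne_zero⟩
  have hζ₂prim : IsPrimitiveRoot ζ₂ (p ^ n₂) := hζ₂ ▸ isPrimitiveRoot_exp _ (NeZero.ne _)
  have ha₂N : a₂.gcd ↑(p ^ n₂) = 1 := by
    rw [← Int.isCoprime_iff_gcd_eq_one, Nat.cast_pow]
    exact (Int.isCoprime_iff_gcd_eq_one.2 ha₂).pow_right
  have hζ₁N : (ζ₁ ^ a₁) ^ (p ^ n₂) = 1 := by
    rw [← zpow_natCast, ← zpow_mul, mul_comm, zpow_mul, zpow_natCast, hζ₁,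
      exp_two_pi_mul_I_div_pow_pow_eq_one hp.ne_zero hn, one_zpow]
  obtain ⟨k, hk⟩ := hζ₂prim.exists_mul_zpow_pow_eq_one ha₂N hζ₁N
  refine Subgroup.mem_zpowers_of_mul_pow_eq_one (k := k) ?_
  by_contra hne
  refine hnoeig _ (mul_mem (Subgroup.subset_closure (by simp))
    (pow_mem (Subgroup.subset_closure (by simp)) k)) hne 0 ?_
  rw [Units.val_mul, Units.val_pow_eq_pow_val, hg₁, hg₂,
    Matrix.diagonal_mul_diagonal_pow_apply_self]
  exact hk

/-- for a prime `p`, diagonal matrices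
`g₁ = diag(ζ₁^a₁, ζ₁^b₁, ζ₁^c₁)` and `g₂ = diag(ζ₂^a₂, ζ₂^b₂, ζ₂^c₂)` in `GL(3,ℂ)`,
with `ζᵢ = exp(2πi/p^{nᵢ})`, `n₁ ≤ n₂`, `a₁, a₂` coprime to `p`:
if no nontrivial element of the group generated by `g₁, g₂` has `1` as an
eigenvalue (a diagonal entry equal to `1`), then `g₁` lies in the cyclic group
generated by `g₂`. -/
theorem stmt3 (p : ℕ) (hp : p.Prime) (n₁ n₂ : ℕ) (hn₁ : 0 < n₁) (hn : n₁ ≤ n₂)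
    (a₁ b₁ c₁ a₂ b₂ c₂ : ℤ)
    (ha₁ : Int.gcd a₁ p = 1) (ha₂ : Int.gcd a₂ p = 1)
    (ζ₁ ζ₂ : ℂ)
    (hζ₁ : ζ₁ = Complex.exp (2 * Real.pi * Complex.I / (p ^ n₁ : ℕ)))
    (hζ₂ : ζ₂ = Complex.exp (2 * Real.pi * Complex.I / (p ^ n₂ : ℕ)))
    (g₁ g₂ : Matrix.GeneralLinearGroup (Fin 3) ℂ)
    (hg₁ : (g₁ : Matrix (Fin 3) (Fin 3) ℂ) = Matrix.diagonal ![ζ₁ ^ a₁, ζ₁ ^ b₁, ζ₁ ^ c₁])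
    (hg₂ : (g₂ : Matrix (Fin 3) (Fin 3) ℂ) = Matrix.diagonal ![ζ₂ ^ a₂, ζ₂ ^ b₂, ζ₂ ^ c₂])
    (hnoeig : ∀ h ∈ Subgroup.closure ({g₁, g₂} : Set (Matrix.GeneralLinearGroup (Fin 3) ℂ)),
      h ≠ 1 → ∀ i : Fin 3, (h : Matrix (Fin 3) (Fin 3) ℂ) i i ≠ 1) :
    g₁ ∈ Subgroup.zpowers g₂ :=
  stmt3_general p hp n₁ n₂ hn a₁ b₁ c₁ a₂ b₂ c₂ ha₂ ζ₁ ζ₂ hζ₁ hζ₂ g₁ g₂ hg₁ hg₂ hnoeig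
end

section
/- Let n, p be coprime positive integers with 0 < p < n, and let G_{n,p} ⊂ GL(2,ℂ) be generated by diag(ζ, ζ^p), ζ = exp(2πi/n), acting on ℂ[u,v] by scaling. Then every invariant monomial u^a v^b (i.e., with a + pb ≡ 0 mod n) is a product of the monomials u^{i_k} v^{j_k}, 0 ≤ k ≤ e+1, where i_k, j_k are given by Riemenschneider's recursion from the Hirzebruch–Jung expansion n/(n-p) = [a₁,...,a_e]. -/
/-!
The continuants `K(a₁,…,a_e)` and `K(a₂,…,a_e)` are coprime and their quotient is
`[a₁,…,a_e]`, so `n/(n-p) = [a₁,…,a_e]` forces them to be `n` and `n - p`. For an exponent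
`(x, y)` put `f k = y iₖ - x jₖ`; it satisfies the same recursion, so telescoping gives
`f (e+1) = -x n ≤ 0 ≤ y n = f 0`, and `n ∣ f k` because `n` divides `f 0` and
`f 1 = y n - (x + p y)`. Hence for some `k ≤ e` the point `(x, y)` lies in the cone spanned by
`(iₖ, jₖ)` and `(iₖ₊₁, jₖ₊₁)`, whose determinant is constantly `n` (the Wronskian of the
recursion). By Cramer's rule the coordinates of `(x, y)` in that cone are `-f (k+1) / n` and
`f k / n`: nonnegative integers.
-/

/-- Evaluation of a Hirzebruch–Jung (negative-regular) continued fraction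
`[a₁,...,a_e] = a₁ - 1/(a₂ - 1/(⋯ - 1/a_e))` as a rational number. -/
def hjEval : List ℤ → ℚ
  | [] => 0
  | [a] => (a : ℚ)
  | a :: b :: l => (a : ℚ) - 1 / hjEval (b :: l)

/-- The continuants `(K(a₁,…,a_e), K(a₂,…,a_e))`, where `K` of the tail of `[]` is taken to
be `0`. -/
def continuants : List ℤ → ℤ × ℤ
  | [] => (1, 0)
  | a :: l => (a * (continuants l).1 - (continuants l).2, (continuants l).1)

theorem continuants_snd_nonneg_and_lt_fst : ∀ l : List ℤ, (∀ z ∈ l, 2 ≤ z) →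
    0 ≤ (continuants l).2 ∧ (continuants l).2 < (continuants l).1
  | [], _ => by simp [continuants]
  | a :: l, hl => by
    obtain ⟨h0, hlt⟩ := continuants_snd_nonneg_and_lt_fst l fun z hz => hl z (by simp [hz])
    have ha : 2 ≤ a := hl a (by simp)
    simp only [continuants]
    constructor <;> nlinarith

theorem isCoprime_continuants : ∀ l : List ℤ, IsCoprime (continuants l).1 (continuants l).2
  | [] => isCoprime_one_left
  | a :: l => by
    have ih := isCoprime_continuants l
    simp only [continuants]
    simpa [sub_eq_neg_add] using ih.symm.neg_left.add_mul_right_left a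

theorem hjEval_eq_continuants :
    ∀ l : List ℤ, (∀ z ∈ l, 2 ≤ z) → hjEval l = (continuants l).1 / (continuants l).2
  | [], _ => by simp [hjEval, continuants]
  | [a], _ => by simp [hjEval, continuants]
  | a :: b :: l, hl => by
    have hbl : ∀ z ∈ b :: l, 2 ≤ z := fun z hz => hl z (List.mem_cons_of_mem a hz)
    have hpos : (0 : ℚ) < (continuants (b :: l)).1 := by
      have := continuants_snd_nonneg_and_lt_fst (b :: l) hbl
      exact_mod_cast this.1.trans_lt this.2
    rw [hjEval, hjEval_eq_continuants (b :: l) hbl, one_div_div,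
      show continuants (a :: b :: l) = (a * (continuants (b :: l)).1 - (continuants (b :: l)).2,
        (continuants (b :: l)).1) from rfl]
    push_cast
    field_simp

theorem continuants_eq_of_hjEval_eq {l : List ℤ} (hl : ∀ z ∈ l, 2 ≤ z) {r s : ℤ}
    (hr : 0 < r) (hs : 0 < s) (hrs : IsCoprime r s) (h : hjEval l = r / s) :
    continuants l = (r, s) := by
  rw [hjEval_eq_continuants l hl] at h
  have hne : (continuants l).2 ≠ 0 := by
    intro h0
    rw [h0, Int.cast_zero, div_zero] at h
    exact (div_pos (Int.cast_pos.2 hr) (Int.cast_pos.2 hs)).ne h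
  have hpos := lt_of_le_of_ne (continuants_snd_nonneg_and_lt_fst l hl).1 hne.symm
  obtain ⟨h1, h2⟩ := Rat.div_int_inj hpos hs
    (Int.isCoprime_iff_gcd_eq_one.1 (isCoprime_continuants l))
    (Int.isCoprime_iff_gcd_eq_one.1 hrs) h
  exact Prod.ext h1 h2

theorem apply_length_succ_eq_continuants (l : List ℤ) (X : ℕ → ℤ)
    (hX : ∀ k (hk : k < l.length), X (k + 2) = l[k] * X (k + 1) - X k) :
    X (l.length + 1) = X 1 * (continuants l).1 - X 0 * (continuants l).2 := by
  induction l generalizing X with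
  | nil => simp [continuants]
  | cons a l ih =>
    have hshift := ih (fun k => X (k + 1)) fun k hk => hX (k + 1) (by simpa using hk)
    have h2 := hX 0 (by simp)
    simp only [List.length_cons, List.getElem_cons_zero, continuants] at hshift h2 ⊢
    rw [hshift, h2]
    ring

def SolvesHJRecursion (a : ℕ → ℤ) (e : ℕ) (X : ℕ → ℤ) : Prop :=
  ∀ k, 1 ≤ k → k ≤ e → X (k + 1) = a k * X k - X (k - 1)

namespace SolvesHJRecursion

variable {a : ℕ → ℤ} {e : ℕ} {X Y : ℕ → ℤ}

theorem mul_sub_mul (hX : SolvesHJRecursion a e X) (hY : SolvesHJRecursion a e Y) (s t : ℤ) :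
    SolvesHJRecursion a e (fun k => s * X k - t * Y k) := by
  intro k hk hke
  simp only [hX k hk hke, hY k hk hke]
  ring

theorem apply_succ_eq_continuants (hX : SolvesHJRecursion a e X) :
    X (e + 1) = X 1 * (continuants (List.ofFn fun k : Fin e => a (k + 1))).1
      - X 0 * (continuants (List.ofFn fun k : Fin e => a (k + 1))).2 := by
  have := apply_length_succ_eq_continuants (List.ofFn fun k : Fin e => a (k + 1)) X
    fun k hk => by simpa using hX (k + 1) (by omega) (by simpa using hk)
  simpa using this

theorem dvd_apply (hX : SolvesHJRecursion a e X) {d : ℤ} (h0 : d ∣ X 0) (h1 : d ∣ X 1) :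
    ∀ k ≤ e + 1, d ∣ X k := by
  have hpair : ∀ k ≤ e, d ∣ X k ∧ d ∣ X (k + 1) := by
    intro k hk
    induction k with
    | zero => exact ⟨h0, h1⟩
    | succ k ih =>
      obtain ⟨hk0, hk1⟩ := ih (by omega)
      refine ⟨hk1, ?_⟩
      rw [hX (k + 1) (by omega) hk, Nat.add_sub_cancel]
      exact (hk1.mul_left _).sub hk0
  intro k hk
  rcases k with _ | k
  · exact h0
  · exact (hpair k (by omega)).2

theorem wronskian (hX : SolvesHJRecursion a e X) (hY : SolvesHJRecursion a e Y) :
    ∀ k ≤ e, X k * Y (k + 1) - X (k + 1) * Y k = X 0 * Y 1 - X 1 * Y 0 := by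
  intro k hk
  induction k with
  | zero => rfl
  | succ k ih =>
    rw [hX (k + 1) (by omega) hk, hY (k + 1) (by omega) hk, Nat.add_sub_cancel, ← ih (by omega)]
    ring

end SolvesHJRecursion

theorem exists_le_apply_and_apply_succ_le {α : Type*} [LinearOrder α] (f : ℕ → α) (c : α) :
    ∀ e, c ≤ f 0 → f (e + 1) ≤ c → ∃ K ≤ e, c ≤ f K ∧ f (K + 1) ≤ c
  | 0, h0, h1 => ⟨0, le_rfl, h0, h1⟩
  | e + 1, h0, h1 => by
    by_cases he : c ≤ f (e + 1)
    · exact ⟨e + 1, le_rfl, he, h1⟩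
    · obtain ⟨K, hK, hfK⟩ := exists_le_apply_and_apply_succ_le f c e h0 (not_le.1 he).le
      exact ⟨K, by omega, hfK⟩

theorem exists_nat_eq_add_of_det {a b c d n x y : ℤ} (hdet : a * d - b * c = n) (hn : 0 < n)
    (hA : n ∣ x * d - y * b) (hB : n ∣ y * a - x * c)
    (hA0 : 0 ≤ x * d - y * b) (hB0 : 0 ≤ y * a - x * c) :
    ∃ A B : ℕ, x = A * a + B * b ∧ y = A * c + B * d := by
  obtain ⟨A, hA⟩ := hA
  obtain ⟨B, hB⟩ := hB
  lift A to ℕ using nonneg_of_mul_nonneg_right (hA ▸ hA0) hn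
  lift B to ℕ using nonneg_of_mul_nonneg_right (hB ▸ hB0) hn
  refine ⟨A, B, mul_left_cancel₀ hn.ne' ?_, mul_left_cancel₀ hn.ne' ?_⟩
  · linear_combination a * hA + b * hB - x * hdet
  · linear_combination c * hA + d * hB - y * hdet

theorem sum_range_single_add_single_mul {N K : ℕ} (hK : K + 1 < N) (A B : ℕ) (f : ℕ → ℤ) :
    ∑ k ∈ Finset.range N, ((Pi.single K A + Pi.single (K + 1) B : ℕ → ℕ) k : ℤ) * f k
      = A * f K + B * f (K + 1) := by
  simp [Pi.single_apply, add_mul, Finset.sum_add_distrib, hK, (show K < N by omega)]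

theorem stmt19_general (n p : ℕ) (hpn : p < n) (hcop : Nat.Coprime p n)
    (e : ℕ) (a I J : ℕ → ℤ)
    (ha : ∀ k, 1 ≤ k → k ≤ e → 2 ≤ a k)
    (hHJ : hjEval (List.ofFn fun k : Fin e => a (k + 1)) = (n : ℚ) / ((n : ℚ) - (p : ℚ)))
    (hI0 : I 0 = (n : ℤ)) (hI1 : I 1 = (n : ℤ) - (p : ℤ))
    (hIrec : ∀ k, 1 ≤ k → k ≤ e → I (k + 1) = a k * I k - I (k - 1))
    (hJ0 : J 0 = 0) (hJ1 : J 1 = 1)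
    (hJrec : ∀ k, 1 ≤ k → k ≤ e → J (k + 1) = a k * J k - J (k - 1))
    (x y : ℕ) (hinv : n ∣ x + p * y) :
    ∃ c : ℕ → ℕ,
      (x : ℤ) = ∑ k ∈ Finset.range (e + 2), (c k : ℤ) * I k ∧
      (y : ℤ) = ∑ k ∈ Finset.range (e + 2), (c k : ℤ) * J k := by
  have hn : (0 : ℤ) < n := by omega
  have hl : ∀ z ∈ List.ofFn fun k : Fin e => a (k + 1), 2 ≤ z :=
    List.forall_mem_ofFn_iff.2 fun k => ha _ (by omega) (by omega)
  have hcop' : IsCoprime (n : ℤ) (n - p) := by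
    simpa [sub_eq_neg_add] using
      (Nat.isCoprime_iff_coprime.2 hcop.symm).neg_right.add_mul_left_right 1
  have hcont : continuants (List.ofFn fun k : Fin e => a (k + 1)) = ((n : ℤ), (n : ℤ) - p) :=
    continuants_eq_of_hjEval_eq hl hn (by omega) hcop' (by push_cast; exact hHJ)
  have hinv' : (n : ℤ) ∣ x + p * y := by exact_mod_cast hinv
  set f : ℕ → ℤ := fun k => y * I k - x * J k
  have hf : SolvesHJRecursion a e f := SolvesHJRecursion.mul_sub_mul hIrec hJrec y x
  have hf1 : f 1 = y * n - (x + p * y) := by simp only [f, hI1, hJ1]; ring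
  have hf_dvd : ∀ k ≤ e + 1, (n : ℤ) ∣ f k :=
    hf.dvd_apply (by simp [f, hI0, hJ0]) (hf1 ▸ (dvd_mul_left _ _).sub hinv')
  have hf_last : f (e + 1) = -(x * n) := by
    rw [hf.apply_succ_eq_continuants, hcont]
    simp only [f, hI0, hI1, hJ0, hJ1]
    ring
  obtain ⟨K, hKe, hfK, hfK1⟩ := exists_le_apply_and_apply_succ_le f 0 e
    (by simp only [f, hI0, hJ0, mul_zero, sub_zero]; positivity)
    (by rw [hf_last, neg_nonpos]; positivity)
  obtain ⟨A, B, hx, hy⟩ := exists_nat_eq_add_of_det (n := n) (x := x) (y := y)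
    (by rw [SolvesHJRecursion.wronskian hIrec hJrec K hKe, hI0, hI1, hJ0, hJ1]; ring) hn
    (by simpa [f] using (hf_dvd (K + 1) (by omega)).neg_right) (hf_dvd K (by omega))
    (by simp only [f] at hfK1; linarith) hfK
  refine ⟨Pi.single K A + Pi.single (K + 1) B, ?_, ?_⟩
  · rw [sum_range_single_add_single_mul (by omega)]; exact hx
  · rw [sum_range_single_add_single_mul (by omega)]; exact hy

/-- every invariant monomial `u^a v^b` (i.e. `a + pb ≡ 0 (mod n)`)
of the cyclic group generated by `diag(ζ, ζ^p)` is a product (with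
multiplicities `c k`) of the monomials `u^{iₖ} v^{jₖ}`, `0 ≤ k ≤ e+1`, given by
Riemenschneider's recursion from the Hirzebruch–Jung expansion
`n/(n-p) = [a₁,...,a_e]`. -/
theorem stmt19 (n p : ℕ) (hp : 0 < p) (hpn : p < n) (hcop : Nat.Coprime p n)
    (e : ℕ) (he : 0 < e) (a I J : ℕ → ℤ)
    (ha : ∀ k, 1 ≤ k → k ≤ e → 2 ≤ a k)
    (hHJ : hjEval (List.ofFn fun k : Fin e => a (k + 1)) = (n : ℚ) / ((n : ℚ) - (p : ℚ)))
    (hI0 : I 0 = (n : ℤ)) (hI1 : I 1 = (n : ℤ) - (p : ℤ))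
    (hIrec : ∀ k, 1 ≤ k → k ≤ e → I (k + 1) = a k * I k - I (k - 1))
    (hJ0 : J 0 = 0) (hJ1 : J 1 = 1)
    (hJrec : ∀ k, 1 ≤ k → k ≤ e → J (k + 1) = a k * J k - J (k - 1))
    (x y : ℕ) (hinv : n ∣ x + p * y) :
    ∃ c : ℕ → ℕ,
      (x : ℤ) = ∑ k ∈ Finset.range (e + 2), (c k : ℤ) * I k ∧
      (y : ℤ) = ∑ k ∈ Finset.range (e + 2), (c k : ℤ) * J k :=
  stmt19_general n p hpn hcop e a I J ha hHJ hI0 hI1 hIrec hJ0 hJ1 hJrec x y hinv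
end
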